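/- If f(λ) = Σ_{j=0}^{n-1} f_j λ^j is an M_n(ℂ)-valued polynomial with f_0 = I, each f_j strictly lower triangular for j ≥ 1, and (e_{n1}λ^n + b) f(λ) = f(λ)(aλ + b) for all λ, then f_j = c_j Λ^j for all j, where c_j = 1/(σ_1⋯σ_j). In particular such f is unique. -/

import Mathlib

open Matrix Finset

noncomputable section

/-- α = e^{2πi/n}, a primitive n-th root of unity. -/
noncomputable def rootα (n : ℕ) : ℂ := Complex.exp (2 * Real.pi * Complex.I / n)

/-- σ_k = (1-α^k)/(1-α). -/
noncomputable def sigc (n k : ℕ) : ℂ := (1 - rootα n ^ k) / (1 - rootα n)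

/-- Λ = Σ_{k=1}^{n-1} σ_k e_{k+1,k} (1-based), i.e. entry (j+1, j) is σ_{j+1} in 0-based indices. -/
noncomputable def Lam (n : ℕ) : Matrix (Fin n) (Fin n) ℂ :=
  Matrix.of (fun i j => if (i : ℕ) = (j : ℕ) + 1 then sigc n ((j : ℕ) + 1) else 0)

/-- b = e_{12} + e_{23} + ⋯ + e_{n-1,n}, the upper shift matrix. -/
def bMat (n : ℕ) : Matrix (Fin n) (Fin n) ℂ :=
  Matrix.of (fun i j => if (j : ℕ) = (i : ℕ) + 1 then 1 else 0)

/-- a = diag(1, α, α², …, α^{n-1}). -/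
noncomputable def aMat (n : ℕ) : Matrix (Fin n) (Fin n) ℂ :=
  Matrix.diagonal (fun i => rootα n ^ (i : ℕ))

/-- e_{n1}, the matrix with 1 in the bottom-left corner. -/
def enone (n : ℕ) : Matrix (Fin n) (Fin n) ℂ :=
  Matrix.of (fun i j => if (i : ℕ) = n - 1 ∧ (j : ℕ) = 0 then 1 else 0)

/-- c_k = 1/(σ_1 ⋯ σ_k), with c_0 = 1. -/
noncomputable def cCoef (n k : ℕ) : ℂ := (∏ m ∈ Finset.Icc 1 k, sigc n m)⁻¹

/-- φ_n(λ) = Σ_{i=0}^{n-1} c_i Λ^i λ^i. -/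
noncomputable def phiMat (n : ℕ) (t : ℂ) : Matrix (Fin n) (Fin n) ℂ :=
  ∑ i ∈ Finset.range n, (cCoef n i * t ^ i) • Lam n ^ i

/-! ### Auxiliary lemmas -/

section Aux

variable {n : ℕ}

lemma rootα_prim (hn : 2 ≤ n) : IsPrimitiveRoot (rootα n) n := by
  simpa [rootα] using Complex.isPrimitiveRoot_exp n (by omega)

lemma rootα_ne_one (hn : 2 ≤ n) : rootα n ≠ 1 := by
  have h := (rootα_prim hn).pow_ne_one_of_pos_of_lt (l := 1) one_ne_zero (by omega)
  simpa using h

lemma sigc_ne_zero (hn : 2 ≤ n) {m : ℕ} (h1 : 1 ≤ m) (h2 : m ≤ n - 1) :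
    sigc n m ≠ 0 := by
  have hnum : rootα n ^ m ≠ 1 :=
    (rootα_prim hn).pow_ne_one_of_pos_of_lt (by omega) (by omega)
  exact div_ne_zero (sub_ne_zero.mpr (fun h => hnum h.symm))
    (sub_ne_zero.mpr (fun h => rootα_ne_one hn h.symm))

lemma sigc_succ (hn : 2 ≤ n) (m : ℕ) :
    sigc n (m + 1) = sigc n m + rootα n ^ m := by
  have hα : (1 : ℂ) - rootα n ≠ 0 := sub_ne_zero.mpr (fun h => rootα_ne_one hn h.symm)
  rw [sigc, sigc, div_add' _ _ _ hα, div_left_inj' hα]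
  ring

lemma sigc_one (hn : 2 ≤ n) : sigc n 1 = 1 := by
  have hα : (1 : ℂ) - rootα n ≠ 0 := sub_ne_zero.mpr (fun h => rootα_ne_one hn h.symm)
  simp [sigc, div_self hα]

/-- coefficient extraction over ℂ -/
lemma coeffs_zero {N : ℕ} (c : ℕ → ℂ)
    (h : ∀ t : ℂ, ∑ k ∈ Finset.range N, t ^ k * c k = 0) :
    ∀ k < N, c k = 0 := by
  have hp : (∑ k ∈ Finset.range N, Polynomial.C (c k) * Polynomial.X ^ k) = 0 := by
    apply Polynomial.funext
    intro t
    have := h t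
    simp only [Polynomial.eval_finset_sum, Polynomial.eval_mul, Polynomial.eval_C,
      Polynomial.eval_pow, Polynomial.eval_X, Polynomial.eval_zero]
    rw [← this]
    exact Finset.sum_congr rfl fun k _ => by ring
  intro k hk
  have h2 := congrArg (fun p => Polynomial.coeff p k) hp
  simp only [Polynomial.finset_sum_coeff, Polynomial.coeff_C_mul, Polynomial.coeff_X_pow,
    Polynomial.coeff_zero, mul_ite, mul_one, mul_zero] at h2
  rwa [Finset.sum_ite_eq (Finset.range N) k c, if_pos (Finset.mem_range.mpr hk)] at h2

lemma mat_coeffs_zero {N : ℕ} (M : ℕ → Matrix (Fin n) (Fin n) ℂ)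
    (h : ∀ t : ℂ, ∑ k ∈ Finset.range N, t ^ k • M k = 0) :
    ∀ k < N, M k = 0 := by
  intro k hk
  ext i j
  refine coeffs_zero (fun k => M k i j) (fun t => ?_) k hk
  have := congrFun (congrFun (h t) i) j
  simpa [Matrix.sum_apply] using this

/-- a Λ = α • (Λ a) -/
lemma a_mul_Lam (hn : 2 ≤ n) :
    aMat n * Lam n = rootα n • (Lam n * aMat n) := by
  ext i j
  simp only [aMat, Lam, Matrix.diagonal_mul, Matrix.mul_diagonal, Matrix.smul_apply,
    Matrix.of_apply, smul_eq_mul]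
  by_cases h : (i : ℕ) = (j : ℕ) + 1
  · rw [if_pos h, h, pow_succ]
    ring
  · rw [if_neg h]
    ring

lemma a_mul_Lam_pow (hn : 2 ≤ n) (m : ℕ) :
    aMat n * Lam n ^ m = (rootα n ^ m) • (Lam n ^ m * aMat n) := by
  induction m with
  | zero => simp
  | succ m ih =>
    have : aMat n * Lam n ^ (m + 1) = (aMat n * Lam n) * Lam n ^ m := by
      rw [pow_succ', ← mul_assoc]
    rw [this, a_mul_Lam hn, smul_mul_assoc, mul_assoc, ih, mul_smul_comm, smul_smul,
      ← mul_assoc]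
    rw [show Lam n * Lam n ^ m = Lam n ^ (m + 1) from (pow_succ' _ _).symm,
      show rootα n * rootα n ^ m = rootα n ^ (m + 1) from (pow_succ' _ _).symm]

lemma bLam_comm (hn : 2 ≤ n) :
    bMat n * Lam n - Lam n * bMat n = aMat n := by
  have hσn : sigc n n = 0 := by
    have := (rootα_prim hn).pow_eq_one
    simp [sigc, this]
  ext i j
  have h1 : (∑ k : Fin n, bMat n i k * Lam n k j)
      = if (i : ℕ) = (j : ℕ) ∧ (i : ℕ) + 1 < n then sigc n ((i : ℕ) + 1) else 0 := by
    simp only [bMat, Lam, Matrix.of_apply]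
    by_cases hi : (i : ℕ) + 1 < n
    · rw [Finset.sum_eq_single (⟨(i : ℕ) + 1, hi⟩ : Fin n)]
      · by_cases hij : (i : ℕ) = (j : ℕ)
        · rw [if_pos rfl, one_mul, if_pos (show (i : ℕ) + 1 = (j : ℕ) + 1 by omega),
            if_pos ⟨hij, hi⟩]
          rw [hij]
        · rw [if_pos rfl, one_mul, if_neg (show ¬ (i : ℕ) + 1 = (j : ℕ) + 1 by omega),
            if_neg (by tauto)]
      · intro k _ hk
        rw [if_neg (fun h => hk (Fin.ext h)), zero_mul]
      · simp
    · rw [Finset.sum_eq_zero, if_neg (by tauto)]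
      intro k _
      rw [if_neg (by omega), zero_mul]
  have h2 : (∑ k : Fin n, Lam n i k * bMat n k j)
      = if (i : ℕ) = (j : ℕ) ∧ 1 ≤ (i : ℕ) then sigc n (i : ℕ) else 0 := by
    simp only [bMat, Lam, Matrix.of_apply]
    have hin : (i : ℕ) < n := i.isLt
    by_cases hi : 1 ≤ (i : ℕ)
    · rw [Finset.sum_eq_single (⟨(i : ℕ) - 1, by omega⟩ : Fin n)]
      · by_cases hij : (i : ℕ) = (j : ℕ)
        · rw [if_pos (show (i : ℕ) = (i : ℕ) - 1 + 1 by omega),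
            if_pos (show (j : ℕ) = (i : ℕ) - 1 + 1 by omega), mul_one,
            if_pos ⟨hij, hi⟩,
            show (i : ℕ) - 1 + 1 = (i : ℕ) by omega]
        · rw [if_pos (show (i : ℕ) = (i : ℕ) - 1 + 1 by omega),
            if_neg (show ¬ (j : ℕ) = (i : ℕ) - 1 + 1 by omega), mul_zero,
            if_neg (by tauto)]
      · intro k _ hk
        rw [if_neg (fun h => hk (Fin.ext (show (k : ℕ) = (i : ℕ) - 1 by omega))), zero_mul]
      · simp
    · rw [Finset.sum_eq_zero, if_neg (by tauto)]
      intro k _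
      rw [if_neg (by omega), zero_mul]
  rw [Matrix.sub_apply, Matrix.mul_apply, Matrix.mul_apply, h1, h2]
  by_cases hij : i = j
  · subst hij
    rw [show aMat n i i = rootα n ^ (i : ℕ) from Matrix.diagonal_apply_eq _ i]
    have hin : (i : ℕ) < n := i.isLt
    by_cases h1' : (i : ℕ) + 1 < n
    · by_cases h2' : 1 ≤ (i : ℕ)
      · rw [if_pos ⟨rfl, h1'⟩, if_pos ⟨rfl, h2'⟩]
        have := sigc_succ hn (i : ℕ)
        rw [this]; ring
      · have h0 : (i : ℕ) = 0 := by omega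
        rw [if_pos ⟨rfl, h1'⟩, if_neg (by omega), h0, sigc_one hn]
        simp [h0]
    · have hi' : (i : ℕ) + 1 = n := by omega
      rw [if_neg (by tauto), if_pos ⟨rfl, by omega⟩]
      have hs := sigc_succ hn (i : ℕ)
      rw [hi', hσn] at hs
      rw [zero_sub]
      linear_combination hs
  · have hij' : (i : ℕ) ≠ (j : ℕ) := fun h => hij (Fin.ext h)
    rw [if_neg (by tauto), if_neg (by tauto),
      show aMat n i j = 0 from Matrix.diagonal_apply_ne _ hij]
    ring

lemma bLamPow_comm (hn : 2 ≤ n) (m : ℕ) :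
    bMat n * Lam n ^ (m + 1) - Lam n ^ (m + 1) * bMat n
      = sigc n (m + 1) • (Lam n ^ m * aMat n) := by
  induction m with
  | zero => simpa [sigc_one hn] using bLam_comm hn
  | succ m ih =>
    have expand : bMat n * Lam n ^ (m + 2) - Lam n ^ (m + 2) * bMat n
        = (bMat n * Lam n - Lam n * bMat n) * Lam n ^ (m + 1)
          + Lam n * (bMat n * Lam n ^ (m + 1) - Lam n ^ (m + 1) * bMat n) := by
      have h1 : Lam n ^ (m + 2) = Lam n * Lam n ^ (m + 1) := by rw [← pow_succ']
      rw [h1]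
      noncomm_ring
    rw [expand, bLam_comm hn, ih, mul_smul_comm, a_mul_Lam_pow hn (m + 1)]
    rw [show Lam n * (Lam n ^ m * aMat n) = Lam n ^ (m + 1) * aMat n by
      rw [← mul_assoc, ← pow_succ']]
    rw [← add_smul]
    congr 1
    rw [sigc_succ hn (m + 1)]
    ring

lemma LamPow_low (hn : 2 ≤ n) (m : ℕ) (i j : Fin n) (hij : (i : ℕ) ≤ (j : ℕ)) :
    (Lam n ^ (m + 1)) i j = 0 := by
  induction m generalizing i j with
  | zero =>
    simp only [zero_add, pow_one, Lam, Matrix.of_apply]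
    rw [if_neg (by omega)]
  | succ m ih =>
    rw [pow_succ', Matrix.mul_apply]
    apply Finset.sum_eq_zero
    intro k _
    by_cases h : (i : ℕ) = (k : ℕ) + 1
    · rw [ih k j (by omega), mul_zero]
    · rw [show Lam n i k = 0 by simp [Lam, h], zero_mul]

/-- injectivity of ad(b) on strictly lower triangular matrices -/
lemma adb_inj (hn : 2 ≤ n) (X : Matrix (Fin n) (Fin n) ℂ)
    (hlow : ∀ i j : Fin n, (i : ℕ) ≤ (j : ℕ) → X i j = 0)
    (hcomm : bMat n * X = X * bMat n) : X = 0 := by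
  have hb1 : ∀ (i j : Fin n) (h : (i : ℕ) + 1 < n),
      (bMat n * X) i j = X ⟨(i : ℕ) + 1, h⟩ j := by
    intro i j h
    rw [Matrix.mul_apply]
    rw [Finset.sum_eq_single (⟨(i : ℕ) + 1, h⟩ : Fin n)]
    · simp [bMat]
    · intro k _ hk
      simp only [bMat, Matrix.of_apply]
      rw [if_neg (fun hh => hk (Fin.ext hh)), zero_mul]
    · simp
  have hb2 : ∀ (i j : Fin n), 1 ≤ (j : ℕ) →
      (X * bMat n) i j = X i ⟨(j : ℕ) - 1, by omega⟩ := by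
    intro i j h
    rw [Matrix.mul_apply]
    rw [Finset.sum_eq_single (⟨(j : ℕ) - 1, by omega⟩ : Fin n)]
    · simp only [bMat, Matrix.of_apply]
      rw [if_pos (show (j : ℕ) = (j : ℕ) - 1 + 1 by omega), mul_one]
    · intro k _ hk
      simp only [bMat, Matrix.of_apply]
      rw [if_neg (fun hh => hk (Fin.ext (show (k : ℕ) = (j : ℕ) - 1 by omega))), mul_zero]
    · simp
  have hb2' : ∀ (i j : Fin n), (j : ℕ) = 0 → (X * bMat n) i j = 0 := by
    intro i j h
    rw [Matrix.mul_apply]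
    apply Finset.sum_eq_zero
    intro k _
    simp only [bMat, Matrix.of_apply]
    rw [if_neg (by omega), mul_zero]
  -- prove entries zero by induction on column index
  have key : ∀ (jv : ℕ) (i j : Fin n), (j : ℕ) = jv → X i j = 0 := by
    intro jv
    induction jv with
    | zero =>
      intro i j hj
      by_cases hi : (i : ℕ) = 0
      · exact hlow i j (by omega)
      · have hi1 : (i : ℕ) - 1 + 1 < n := by have := i.isLt; omega
        have := congrFun (congrFun hcomm (⟨(i : ℕ) - 1, by omega⟩ : Fin n)) j
        rw [hb1 _ _ hi1, hb2' _ _ hj] at this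
        have hieq : (⟨(i : ℕ) - 1 + 1, hi1⟩ : Fin n) = i :=
          Fin.ext (show (i : ℕ) - 1 + 1 = (i : ℕ) by omega)
        rwa [hieq] at this
    | succ jv ih =>
      intro i j hj
      by_cases hij : (i : ℕ) ≤ (j : ℕ)
      · exact hlow i j hij
      · have hi1 : (i : ℕ) - 1 + 1 < n := by have := i.isLt; omega
        have := congrFun (congrFun hcomm (⟨(i : ℕ) - 1, by omega⟩ : Fin n)) j
        rw [hb1 _ _ hi1, hb2 _ _ (by omega)] at this
        have hieq : (⟨(i : ℕ) - 1 + 1, hi1⟩ : Fin n) = i :=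
          Fin.ext (show (i : ℕ) - 1 + 1 = (i : ℕ) by omega)
        rw [hieq] at this
        rw [this]
        exact ih _ _ (show (j : ℕ) - 1 = jv by omega)
  ext i j
  simp [key (j : ℕ) i j rfl]

lemma cCoef_zero : cCoef n 0 = 1 := by simp [cCoef]

lemma cCoef_succ (hn : 2 ≤ n) (j : ℕ) (hj : j + 1 ≤ n - 1) :
    cCoef n (j + 1) * sigc n (j + 1) = cCoef n j := by
  have hσ : sigc n (j + 1) ≠ 0 := sigc_ne_zero hn (by omega) hj
  rw [cCoef, cCoef, Finset.prod_Icc_succ_top (by omega)]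
  rw [mul_inv]
  field_simp

/-- The coefficient matrices of the polynomial identity. -/
def auxE (n : ℕ) (f : ℕ → Matrix (Fin n) (Fin n) ℂ) (k : ℕ) : Matrix (Fin n) (Fin n) ℂ :=
  (if k < n then bMat n * f k - f k * bMat n else 0)
    + (if n ≤ k then enone n * f (k - n) else 0)
    - (if 1 ≤ k ∧ k ≤ n then f (k - 1) * aMat n else 0)

end Aux

theorem stmt7 (n : ℕ) (hn : 2 ≤ n) (f : ℕ → Matrix (Fin n) (Fin n) ℂ)
    (h0 : f 0 = 1)
    (hlow : ∀ j, 1 ≤ j → j ≤ n - 1 → ∀ i k : Fin n, (i : ℕ) ≤ (k : ℕ) → f j i k = 0)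
    (heq : ∀ t : ℂ,
      (t ^ n • enone n + bMat n) * (∑ j ∈ Finset.range n, t ^ j • f j)
        = (∑ j ∈ Finset.range n, t ^ j • f j) * (t • aMat n + bMat n)) :
    ∀ j, j ≤ n - 1 → f j = cCoef n j • Lam n ^ j := by
  have key : ∀ t : ℂ, ∑ k ∈ Finset.range (n + n), t ^ k • auxE n f k = 0 := by
    intro t
    have hsplit : ∑ k ∈ Finset.range (n + n), t ^ k • auxE n f k
        = ∑ k ∈ Finset.range n, t ^ k • auxE n f k
          + ∑ k ∈ Finset.range n, t ^ (n + k) • auxE n f (n + k) :=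
      Finset.sum_range_add _ n n
    have e1 : ∑ k ∈ Finset.range n, t ^ k • auxE n f k
        = ∑ k ∈ Finset.range n, t ^ k • (bMat n * f k)
          - ∑ k ∈ Finset.range n, t ^ k • (f k * bMat n)
          - ∑ k ∈ Finset.range n, (if 1 ≤ k then t ^ k • (f (k - 1) * aMat n) else 0) := by
      rw [← Finset.sum_sub_distrib, ← Finset.sum_sub_distrib]
      refine Finset.sum_congr rfl fun k hk => ?_
      have hk' : k < n := Finset.mem_range.mp hk
      simp only [auxE]
      rw [if_pos hk', if_neg (show ¬ n ≤ k by omega), add_zero]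
      by_cases h1k : 1 ≤ k
      · rw [if_pos ⟨h1k, by omega⟩, if_pos h1k, smul_sub, smul_sub]
      · rw [if_neg (fun hc => h1k hc.1), if_neg h1k, sub_zero, sub_zero, smul_sub]
    have e2 : ∑ k ∈ Finset.range n, t ^ (n + k) • auxE n f (n + k)
        = ∑ k ∈ Finset.range n, t ^ (n + k) • (enone n * f k)
          - t ^ n • (f (n - 1) * aMat n) := by
      have hcongr : ∀ k ∈ Finset.range n, t ^ (n + k) • auxE n f (n + k)
          = t ^ (n + k) • (enone n * f k)
            - (if k = 0 then t ^ n • (f (n - 1) * aMat n) else 0) := by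
        intro k hk
        have hk' : k < n := Finset.mem_range.mp hk
        simp only [auxE]
        rw [if_neg (show ¬ n + k < n by omega), if_pos (show n ≤ n + k by omega),
          show n + k - n = k by omega, zero_add]
        by_cases hk0 : k = 0
        · subst hk0
          rw [if_pos ⟨by omega, by omega⟩, if_pos rfl,
            show n + 0 - 1 = n - 1 by omega, show n + 0 = n by omega, smul_sub]
        · rw [if_neg (show ¬ (1 ≤ n + k ∧ n + k ≤ n) by omega), if_neg hk0,
            sub_zero, sub_zero]
      rw [Finset.sum_congr rfl hcongr, Finset.sum_sub_distrib]
      congr 1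
      rw [Finset.sum_ite_eq' (Finset.range n)]
      rw [if_pos (Finset.mem_range.mpr (by omega))]
    have e3 : ∑ k ∈ Finset.range n, (if 1 ≤ k then t ^ k • (f (k - 1) * aMat n) else 0)
          + t ^ n • (f (n - 1) * aMat n)
        = ∑ k ∈ Finset.range n, t ^ (k + 1) • (f k * aMat n) := by
      set g : ℕ → Matrix (Fin n) (Fin n) ℂ :=
        fun k => if 1 ≤ k then t ^ k • (f (k - 1) * aMat n) else 0 with hg
      have hgn : g n = t ^ n • (f (n - 1) * aMat n) := if_pos (by omega)
      have hg0 : g 0 = 0 := if_neg (by omega)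
      have hgk : ∀ k : ℕ, g (k + 1) = t ^ (k + 1) • (f k * aMat n) := by
        intro k
        simp only [hg]
        rw [if_pos (by omega)]
        norm_num
      calc ∑ k ∈ Finset.range n, g k + t ^ n • (f (n - 1) * aMat n)
          = ∑ k ∈ Finset.range (n + 1), g k := by rw [Finset.sum_range_succ, hgn]
        _ = ∑ k ∈ Finset.range n, g (k + 1) + g 0 := Finset.sum_range_succ' g n
        _ = ∑ k ∈ Finset.range n, t ^ (k + 1) • (f k * aMat n) := by
            rw [hg0, add_zero]
            exact Finset.sum_congr rfl fun k _ => hgk k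
    have hL : (t ^ n • enone n + bMat n) * (∑ j ∈ Finset.range n, t ^ j • f j)
        = ∑ k ∈ Finset.range n, t ^ (n + k) • (enone n * f k)
          + ∑ k ∈ Finset.range n, t ^ k • (bMat n * f k) := by
      rw [add_mul, smul_mul_assoc, Finset.mul_sum, Finset.mul_sum, Finset.smul_sum]
      congr 1
      · exact Finset.sum_congr rfl fun k _ => by
          rw [mul_smul_comm, smul_smul, ← pow_add]
      · exact Finset.sum_congr rfl fun k _ => mul_smul_comm _ _ _
    have hR : (∑ j ∈ Finset.range n, t ^ j • f j) * (t • aMat n + bMat n)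
        = ∑ k ∈ Finset.range n, t ^ (k + 1) • (f k * aMat n)
          + ∑ k ∈ Finset.range n, t ^ k • (f k * bMat n) := by
      rw [mul_add, mul_smul_comm, Finset.sum_mul, Finset.sum_mul, Finset.smul_sum]
      congr 1
      · refine Finset.sum_congr rfl fun k _ => ?_
        rw [smul_mul_assoc, smul_smul,
          show t * t ^ k = t ^ (k + 1) from (pow_succ' t k).symm]
      · exact Finset.sum_congr rfl fun k _ => smul_mul_assoc _ _ _
    have hexp := heq t
    rw [hL, hR] at hexp
    rw [hsplit, e1, e2]
    calc (∑ k ∈ Finset.range n, t ^ k • (bMat n * f k)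
          - ∑ k ∈ Finset.range n, t ^ k • (f k * bMat n)
          - ∑ k ∈ Finset.range n, (if 1 ≤ k then t ^ k • (f (k - 1) * aMat n) else 0))
        + (∑ k ∈ Finset.range n, t ^ (n + k) • (enone n * f k)
          - t ^ n • (f (n - 1) * aMat n))
        = (∑ k ∈ Finset.range n, t ^ (n + k) • (enone n * f k)
            + ∑ k ∈ Finset.range n, t ^ k • (bMat n * f k))
          - (∑ k ∈ Finset.range n, t ^ k • (f k * bMat n)
            + (∑ k ∈ Finset.range n, (if 1 ≤ k then t ^ k • (f (k - 1) * aMat n) else 0)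
              + t ^ n • (f (n - 1) * aMat n))) := by abel
      _ = 0 := by rw [hexp, e3]; abel
  have hE0 : ∀ k, k < n + n → auxE n f k = 0 := fun k hk =>
    mat_coeffs_zero (auxE n f) key k hk
  have hcomm : ∀ k, 1 ≤ k → k ≤ n - 1 →
      bMat n * f k - f k * bMat n = f (k - 1) * aMat n := by
    intro k h1 h2
    have h := hE0 k (by omega)
    simp only [auxE] at h
    rw [if_pos (by omega), if_neg (by omega), if_pos ⟨h1, by omega⟩, add_zero] at h
    exact sub_eq_zero.mp h
  intro j
  induction j with
  | zero =>
    intro _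
    simp [h0, cCoef_zero]
  | succ j ih =>
    intro hj
    have hj' : j ≤ n - 1 := by omega
    have hfj := ih hj'
    have hXlow : ∀ i k : Fin n, (i : ℕ) ≤ (k : ℕ) →
        (f (j + 1) - cCoef n (j + 1) • Lam n ^ (j + 1)) i k = 0 := by
      intro i k hik
      simp only [Matrix.sub_apply, Matrix.smul_apply]
      rw [hlow (j + 1) (by omega) hj i k hik, LamPow_low hn j i k hik, smul_zero, sub_zero]
    have hXcomm : bMat n * (f (j + 1) - cCoef n (j + 1) • Lam n ^ (j + 1))
        = (f (j + 1) - cCoef n (j + 1) • Lam n ^ (j + 1)) * bMat n := by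
      have h1 := hcomm (j + 1) (by omega) hj
      rw [show j + 1 - 1 = j by omega] at h1
      have h2 := bLamPow_comm hn j
      have h3 : f j * aMat n = cCoef n j • (Lam n ^ j * aMat n) := by
        rw [hfj, smul_mul_assoc]
      have h4 : cCoef n (j + 1) • (sigc n (j + 1) • (Lam n ^ j * aMat n))
          = cCoef n j • (Lam n ^ j * aMat n) := by
        rw [smul_smul, cCoef_succ hn j hj]
      have hz : bMat n * (f (j + 1) - cCoef n (j + 1) • Lam n ^ (j + 1))
          - (f (j + 1) - cCoef n (j + 1) • Lam n ^ (j + 1)) * bMat n = 0 := by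
        have expand : bMat n * (f (j + 1) - cCoef n (j + 1) • Lam n ^ (j + 1))
            - (f (j + 1) - cCoef n (j + 1) • Lam n ^ (j + 1)) * bMat n
            = (bMat n * f (j + 1) - f (j + 1) * bMat n)
              - cCoef n (j + 1) • (bMat n * Lam n ^ (j + 1) - Lam n ^ (j + 1) * bMat n) := by
          rw [mul_sub, sub_mul, mul_smul_comm, smul_mul_assoc, smul_sub]
          abel
        rw [expand, h1, h2, h4, h3, sub_self]
      exact sub_eq_zero.mp hz
    have hX0 := adb_inj hn _ hXlow hXcomm
    exact sub_eq_zero.mp hX0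

end
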